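/- Let p be a prime and let σ_j = Σ_{i=0}^{j} p^i. If n = Σ_{j=0}^{k} b_j σ_j for nonnegative integers b_0, …, b_k with n ≥ 1, then λ_p(n) ≤ Σ_{j=0}^{k} b_j p^j. -/

import Mathlib

/-- The row space of a matrix over `ZMod p`: all linear combinations of its rows. -/
def rowSpace {p m n : ℕ} (M : Matrix (Fin m) (Fin n) (ZMod p)) :
    Submodule (ZMod p) (Fin n → ZMod p) :=
  Submodule.span (ZMod p) {v | ∃ i, v = M i}

/-- The capacity of a matrix: the maximal Hamming weight of a vector in its row space. -/
noncomputable def capacity {p m n : ℕ} (M : Matrix (Fin m) (Fin n) (ZMod p)) : ℕ :=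
  sSup (hammingNorm '' (rowSpace M : Set (Fin n → ZMod p)))

/-- `lambdaP p n` is the minimum capacity over all matrices over `𝔽_p`
with `n` columns, none of which is a zero column.  (For `n = 0` this gives `0`.) -/
noncomputable def lambdaP (p n : ℕ) : ℕ :=
  sInf {c | ∃ (m : ℕ) (M : Matrix (Fin m) (Fin n) (ZMod p)),
    (∀ j, ∃ i, M i j ≠ 0) ∧ c = capacity M}

/-- `sigmaP p k = 1 + p + ⋯ + p^k`. -/
def sigmaP (p k : ℕ) : ℕ := ∑ j ∈ Finset.range (k + 1), p ^ j

/-!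
A linear code of length `n` (the row space of a matrix) in which no coordinate vanishes
identically and all words have weight at most `c` witnesses `λ_p(n) ≤ c`. Disjoint unions of such codes add both parameters, and the recursive
simplex construction turns `(n, c)` into `(n p + 1, max (p c) (n (p - 1) + 1))`; starting from
`(1, 1)` it yields `(σ_k, p^k)`, and sums of multiples of these give the bound.
-/

open Finset

universe u

section Hamming

variable {α β R : Type*} [Fintype α] [Fintype β] [DecidableEq R] [Zero R]

theorem hammingNorm_sumElim (u : α → R) (w : β → R) :
    hammingNorm (Sum.elim u w) = hammingNorm u + hammingNorm w := by
  simp only [hammingNorm, card_filter, Fintype.sum_sum_type]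
  rfl

theorem hammingNorm_comp_fst (u : α → R) :
    hammingNorm (fun x : α × β => u x.1) = hammingNorm u * Fintype.card β := by
  simp only [hammingNorm, card_filter, Fintype.sum_prod_type, sum_mul]
  exact sum_congr rfl fun _ _ => by split_ifs <;> simp

theorem hammingNorm_comp_equiv (e : α ≃ β) (v : β → R) :
    hammingNorm (v ∘ e) = hammingNorm v := by
  simp only [hammingNorm, card_filter]
  exact e.sum_comp fun j => if v j ≠ 0 then 1 else 0

end Hamming

def HasFullSupportCode (R : Type u) [Semiring R] [DecidableEq R] (n c : ℕ) : Prop :=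
  ∃ (β : Type u) (_ : Fintype β) (W : Submodule R (β → R)), Fintype.card β = n ∧
    (∀ j, ∃ v ∈ W, v j ≠ 0) ∧ ∀ v ∈ W, hammingNorm v ≤ c

namespace HasFullSupportCode

variable {R : Type u} [Semiring R] [DecidableEq R]

theorem zero : HasFullSupportCode R 0 0 :=
  ⟨PEmpty, inferInstance, ⊤, rfl, nofun, fun v _ => by simp [hammingNorm]⟩

theorem add {n₁ c₁ n₂ c₂ : ℕ} (h₁ : HasFullSupportCode R n₁ c₁)
    (h₂ : HasFullSupportCode R n₂ c₂) : HasFullSupportCode R (n₁ + n₂) (c₁ + c₂) := by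
  obtain ⟨β₁, _, W₁, rfl, hsupp₁, hwt₁⟩ := h₁
  obtain ⟨β₂, _, W₂, rfl, hsupp₂, hwt₂⟩ := h₂
  refine ⟨β₁ ⊕ β₂, inferInstance,
    (W₁.prod W₂).comap (LinearEquiv.sumArrowLequivProdArrow β₁ β₂ R R).toLinearMap,
    Fintype.card_sum .., ?_, fun v hv => ?_⟩
  · rintro (j | j)
    · obtain ⟨v, hv, hvj⟩ := hsupp₁ j
      exact ⟨Sum.elim v 0, ⟨hv, W₂.zero_mem⟩, hvj⟩
    · obtain ⟨v, hv, hvj⟩ := hsupp₂ j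
      exact ⟨Sum.elim 0 v, ⟨W₁.zero_mem, hv⟩, hvj⟩
  · rw [← Sum.elim_comp_inl_inr v, hammingNorm_sumElim]
    exact add_le_add (hwt₁ _ hv.1) (hwt₂ _ hv.2)

end HasFullSupportCode

def fullSupportCodeParams (R : Type u) [Semiring R] [DecidableEq R] :
    AddSubmonoid (ℕ × ℕ) where
  carrier := {nc | HasFullSupportCode R nc.1 nc.2}
  zero_mem' := HasFullSupportCode.zero
  add_mem' := HasFullSupportCode.add

@[simp]
theorem mem_fullSupportCodeParams {R : Type u} [Semiring R] [DecidableEq R] {nc : ℕ × ℕ} :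
    nc ∈ fullSupportCodeParams R ↔ HasFullSupportCode R nc.1 nc.2 :=
  Iff.rfl

theorem sigmaP_succ (q k : ℕ) : sigmaP q (k + 1) = sigmaP q k * q + 1 := by
  simp only [sigmaP, sum_range_succ' _ (k + 1), pow_succ, ← sum_mul, pow_zero]

theorem sigmaP_mul_sub_one_add_one {q : ℕ} (hq : 1 ≤ q) (k : ℕ) :
    sigmaP q k * (q - 1) + 1 = q ^ (k + 1) := by
  rw [sigmaP, geom_sum_mul_of_one_le hq, Nat.sub_add_cancel (Nat.one_le_pow _ _ hq)]

def simplexExtension (R β : Type*) [CommSemiring R] :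
    R × (β → R) →ₗ[R] (β × R) ⊕ PUnit.{u + 1} → R where
  toFun x := Sum.elim (fun ja => x.1 * ja.2 + x.2 ja.1) (fun _ => x.1)
  map_add' x y := by ext (_ | _) <;> simp; ring
  map_smul' r x := by ext (_ | _) <;> simp; ring

section FiniteField

variable {F : Type u} [Field F] [Fintype F] [DecidableEq F]

theorem card_filter_mul_add_ne_zero {t : F} (ht : t ≠ 0) (s : F) :
    #{a | t * a + s ≠ 0} = Fintype.card F - 1 := by
  have hbij : Function.Bijective (fun a : F => t * a + s) :=
    Finite.injective_iff_bijective.mp fun a b hab => mul_left_cancel₀ ht (add_right_cancel hab)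
  rw [card_filter, hbij.sum_comp (fun b => if b ≠ 0 then 1 else 0), ← card_filter, filter_ne',
    card_erase_of_mem (mem_univ _), card_univ]

theorem hammingNorm_mul_snd_add_fst {β : Type*} [Fintype β] {t : F} (ht : t ≠ 0)
    (u : β → F) :
    hammingNorm (fun x : β × F => t * x.2 + u x.1) = Fintype.card β * (Fintype.card F - 1) := by
  rw [hammingNorm, card_filter, Fintype.sum_prod_type]
  simp only [← card_filter, card_filter_mul_add_ne_zero ht, sum_const, card_univ, smul_eq_mul]

/-- With `q = |F|`, this is the recursive construction of the simplex code: a nonzero `t`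
produces weight `n (q - 1) + 1`, while `t = 0` repeats the old word `q` times. -/
theorem HasFullSupportCode.extend {n c : ℕ} (h : HasFullSupportCode F n c) :
    HasFullSupportCode F (n * Fintype.card F + 1)
      (max (Fintype.card F * c) (n * (Fintype.card F - 1) + 1)) := by
  obtain ⟨β, _, W, rfl, hsupp, hwt⟩ := h
  refine ⟨(β × F) ⊕ PUnit.{u + 1}, inferInstance,
    (Submodule.prod ⊤ W).map (simplexExtension F β), by simp, ?_, ?_⟩
  · rintro (⟨j, a⟩ | ⟨⟩)
    · obtain ⟨v, hv, hvj⟩ := hsupp j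
      exact ⟨_, ⟨(0, v), ⟨trivial, hv⟩, rfl⟩, by simpa [simplexExtension] using hvj⟩
    · exact ⟨_, ⟨(1, 0), ⟨trivial, W.zero_mem⟩, rfl⟩, by simp [simplexExtension]⟩
  · rintro _ ⟨⟨t, u⟩, ⟨-, hu⟩, rfl⟩
    simp only [simplexExtension, LinearMap.coe_mk, AddHom.coe_mk, hammingNorm_sumElim]
    by_cases ht : t = 0
    · subst ht
      simp only [zero_mul, zero_add, hammingNorm_comp_fst, ← Pi.zero_def, hammingNorm_zero,
        add_zero, mul_comm _ (Fintype.card F)]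
      exact le_max_of_le_left (Nat.mul_le_mul_left _ (hwt u hu))
    · rw [hammingNorm_mul_snd_add_fst ht]
      exact le_max_of_le_right (Nat.add_le_add_left hammingNorm_le_card_fintype _)

theorem hasFullSupportCode_sigmaP (k : ℕ) :
    HasFullSupportCode F (sigmaP (Fintype.card F) k) (Fintype.card F ^ k) := by
  induction k with
  | zero => simpa [sigmaP] using (HasFullSupportCode.zero (R := F)).extend
  | succ k ih =>
    convert ih.extend using 1
    · rw [sigmaP_succ]
    · rw [sigmaP_mul_sub_one_add_one Fintype.card_pos, pow_succ', max_self]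

end FiniteField

theorem lambdaP_le_of_hasFullSupportCode {p n c : ℕ} [NeZero p]
    (h : HasFullSupportCode (ZMod p) n c) : lambdaP p n ≤ c := by
  obtain ⟨β, _, W, rfl, hsupp, hwt⟩ := h
  set e := (Fintype.equivFin β).symm
  set W' := W.map (LinearEquiv.funCongrLeft (ZMod p) (ZMod p) e).toLinearMap
  set M : Matrix (Fin (Nat.card W')) (Fin (Fintype.card β)) (ZMod p) :=
    fun i => ((Finite.equivFin W').symm i : Fin (Fintype.card β) → ZMod p)
  have hrows : rowSpace M = W' := by
    refine (congrArg _ (Set.ext fun v => ⟨?_, fun hv => ?_⟩)).trans (Submodule.span_eq W')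
    · rintro ⟨i, rfl⟩
      exact Subtype.prop _
    · exact ⟨Finite.equivFin W' ⟨v, hv⟩, by simp [M]⟩
  have hcols : ∀ j, ∃ i, M i j ≠ 0 := by
    intro j
    obtain ⟨v, hv, hvj⟩ := hsupp (e j)
    exact ⟨Finite.equivFin W' ⟨v ∘ e, v, hv, rfl⟩, by simpa [M] using hvj⟩
  calc lambdaP p (Fintype.card β) ≤ capacity M := Nat.sInf_le ⟨_, M, hcols, rfl⟩
    _ ≤ c := by
      refine csSup_le' ?_
      rintro _ ⟨_, hw, rfl⟩
      rw [SetLike.mem_coe, hrows] at hw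
      obtain ⟨v, hv, rfl⟩ := hw
      exact (hammingNorm_comp_equiv e v).trans_le (hwt v hv)

theorem statement5_general (p : ℕ) (hp : p.Prime) (k n : ℕ)
    (b : ℕ → ℕ)
    (hnsum : n = ∑ j ∈ Finset.range (k + 1), b j * sigmaP p j) :
    lambdaP p n ≤ ∑ j ∈ Finset.range (k + 1), b j * p ^ j := by
  have := Fact.mk hp
  have hsimplex (j : ℕ) : (sigmaP p j, p ^ j) ∈ fullSupportCodeParams (ZMod p) := by
    simpa only [mem_fullSupportCodeParams, ZMod.card]
      using hasFullSupportCode_sigmaP (F := ZMod p) j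
  have hsum : (n, ∑ j ∈ range (k + 1), b j * p ^ j) =
      ∑ j ∈ range (k + 1), b j • (sigmaP p j, p ^ j) := by
    simp [Prod.ext_iff, hnsum, Prod.fst_sum, Prod.snd_sum]
  have hmem : (n, ∑ j ∈ range (k + 1), b j * p ^ j) ∈ fullSupportCodeParams (ZMod p) :=
    hsum ▸ sum_mem fun j _ => nsmul_mem (hsimplex j) _
  exact lambdaP_le_of_hasFullSupportCode hmem

theorem statement5 (p : ℕ) (hp : p.Prime) (k n : ℕ) (hn : 1 ≤ n)
    (b : ℕ → ℕ)
    (hnsum : n = ∑ j ∈ Finset.range (k + 1), b j * sigmaP p j) :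
    lambdaP p n ≤ ∑ j ∈ Finset.range (k + 1), b j * p ^ j :=
  statement5_general p hp k n b hnsum
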